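/- The Table II mapping P is distance invariant: for all symbols s, s' ∈ F₂², d_H(P(s), P(s')) = w(s + s'), where w(0,0) = 0, w(0,1) = w(1,0) = 4, and w(1,1) = 6. Consequently, for every input length L ≥ 1, the expanded (7,5) permutation trellis code obtained by encoding the L input bits followed by two zero flush bits and applying P to each of the L+2 output symbols satisfies: for every integer d ≥ 0 and any two input sequences a, b ∈ F₂^L, the number of input sequences u ∈ F₂^L whose expanded codeword is at Hamming distance d from the expanded codeword of a equals the number of input sequences whose expanded codeword is at Hamming distance d from the expanded codeword of b. In particular, the number a_d of expanded codewords at distance d from a transmitted expanded codeword is independent of the transmitted codeword. -/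

import Mathlib

/-- Next state of the rate-1/2 (7,5) convolutional encoder: on input `u` from
state `(s₁, s₂)` the encoder moves to state `(u, s₁)`. -/
def nextState (u : ZMod 2) (s : ZMod 2 × ZMod 2) : ZMod 2 × ZMod 2 :=
  (u, s.1)

/-- Output symbol of the rate-1/2 (7,5) convolutional encoder: on input `u`
from state `(s₁, s₂)` the encoder outputs `(u + s₁ + s₂, u + s₂)`. -/
def outSym (u : ZMod 2) (s : ZMod 2 × ZMod 2) : ZMod 2 × ZMod 2 :=
  (u + s.1 + s.2, u + s.2)

/-- The sequence of states visited (after each input bit) when feeding the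
input list `us` to the encoder started in state `s`. -/
def encStates : ZMod 2 × ZMod 2 → List (ZMod 2) → List (ZMod 2 × ZMod 2)
  | _, [] => []
  | s, u :: us => nextState u s :: encStates (nextState u s) us

/-- The sequence of output symbols produced when feeding the input list `us`
to the encoder started in state `s`. -/
def encOutputs : ZMod 2 × ZMod 2 → List (ZMod 2) → List (ZMod 2 × ZMod 2)
  | _, [] => []
  | s, u :: us => outSym u s :: encOutputs (nextState u s) us

/-- The Table II mapping `P` from output symbols to 3×3 permutation words:
`(0,0) ↦ 231`, `(0,1) ↦ 213`, `(1,0) ↦ 132`, `(1,1) ↦ 123` (0-indexed, the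
word is the function `k ↦ w_k`). -/
def tableP (s : ZMod 2 × ZMod 2) : Fin 3 → Fin 3 :=
  if s = (0, 0) then ![1, 2, 0]
  else if s = (0, 1) then ![1, 0, 2]
  else if s = (1, 0) then ![0, 2, 1]
  else ![0, 1, 2]

/-- The 3×3 permutation code matrix of an output symbol: entry `(j,k)` is
`true` iff `w_k = j` for the Table II word `w` of the symbol. -/
def Pmat (s : ZMod 2 × ZMod 2) : Fin 3 × Fin 3 → Bool :=
  fun jk => decide (tableP s jk.2 = jk.1)

/-- The symbol weight `w`: `w(0,0) = 0`, `w(0,1) = w(1,0) = 4`, `w(1,1) = 6`. -/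
def wgt (s : ZMod 2 × ZMod 2) : ℕ :=
  if s = (0, 0) then 0 else if s = (1, 1) then 6 else 4

/-- The expanded codeword of an input sequence `u` of length `L`: encode the
`L` input bits followed by two zero flush bits and map each of the `L + 2`
output symbols to its 3×3 permutation code matrix. -/
def encExp {L : ℕ} (u : Fin L → ZMod 2) : List (ZMod 2 × ZMod 2) :=
  encOutputs (0, 0) (List.ofFn u ++ [0, 0])

/-- Hamming distance between two expanded codewords (concatenations of 3×3
permutation code matrices): the sum, over the symbol positions, of the entrywise
Hamming distances of the corresponding permutation code matrices. -/
def ecDist (xs ys : List (ZMod 2 × ZMod 2)) : ℕ :=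
  (List.zipWith (fun a b => hammingDist (Pmat a) (Pmat b)) xs ys).sum

/-!
Both parts reduce to finite facts plus linearity. The symbol-level identity is a check over the
sixteen pairs of symbols. The encoder with its zero flush is `F₂`-linear, so symbol by symbol
`d_H(c(u), c(a)) = w(c(u) + c(a)) = w(c(u + a))`; hence `u ↦ u + (a - b)` maps the inputs at
distance `d` from `a` bijectively onto those at distance `d` from `b`.
-/

lemma hammingDist_Pmat (s s' : ZMod 2 × ZMod 2) :
    hammingDist (Pmat s) (Pmat s') = wgt (s + s') := by
  revert s s'
  decide

lemma ecDist_eq_sum_wgt (xs ys : List (ZMod 2 × ZMod 2)) :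
    ecDist xs ys = ((List.zipWith (· + ·) xs ys).map wgt).sum := by
  simp only [ecDist, List.map_zipWith, hammingDist_Pmat]

lemma outSym_add (u u' : ZMod 2) (s s' : ZMod 2 × ZMod 2) :
    outSym u s + outSym u' s' = outSym (u + u') (s + s') := by
  simp only [outSym, Prod.mk_add_mk, Prod.fst_add, Prod.snd_add, Prod.mk.injEq]
  constructor <;> ring

lemma nextState_add (u u' : ZMod 2) (s s' : ZMod 2 × ZMod 2) :
    nextState u s + nextState u' s' = nextState (u + u') (s + s') := rfl

lemma encOutputs_add : ∀ (us us' : List (ZMod 2)) (s s' : ZMod 2 × ZMod 2),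
    us.length = us'.length →
    encOutputs (s + s') (List.zipWith (· + ·) us us')
      = List.zipWith (· + ·) (encOutputs s us) (encOutputs s' us')
  | [], [], _, _, _ => rfl
  | u :: us, u' :: us', s, s', h => by
    simp only [encOutputs, List.zipWith, outSym_add, ← nextState_add,
      encOutputs_add us us' _ _ (Nat.succ.inj h)]

lemma List.zipWith_add_ofFn {M : Type*} [Add M] {n : ℕ} (f g : Fin n → M) :
    List.zipWith (· + ·) (List.ofFn f) (List.ofFn g) = List.ofFn (f + g) := by
  apply List.ext_getElem <;> simp

lemma encExp_add {L : ℕ} (u a : Fin L → ZMod 2) :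
    encExp (u + a) = List.zipWith (· + ·) (encExp u) (encExp a) := by
  have hflush : ([0, 0] : List (ZMod 2)) = List.zipWith (· + ·) [0, 0] [0, 0] := by simp
  rw [encExp, encExp, encExp, ← encOutputs_add _ _ _ _ (by simp), ← List.zipWith_add_ofFn,
    List.zipWith_append (by simp), ← hflush]
  rfl

lemma ecDist_encExp {L : ℕ} (u a : Fin L → ZMod 2) :
    ecDist (encExp u) (encExp a) = ((encExp (u + a)).map wgt).sum := by
  rw [ecDist_eq_sum_wgt, encExp_add]

/-- The Table II mapping is distance invariant: `d_H(P(s), P(s')) = w(s + s')`.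
Consequently the expanded (7,5) permutation trellis code is distance invariant:
for every input length `L ≥ 1`, every `d`, and any input sequences `a, b`, the
number of input sequences whose expanded codeword is at Hamming distance `d`
from the expanded codeword of `a` equals the corresponding number for `b`;
in particular `a_d` is independent of the transmitted codeword. -/
theorem stmt_10 :
    (∀ s s' : ZMod 2 × ZMod 2, hammingDist (Pmat s) (Pmat s') = wgt (s + s')) ∧
    (∀ L : ℕ, 1 ≤ L → ∀ (d : ℕ) (a b : Fin L → ZMod 2),
      (Finset.univ.filter fun u : Fin L → ZMod 2 =>
          ecDist (encExp u) (encExp a) = d).card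
        = (Finset.univ.filter fun u : Fin L → ZMod 2 =>
          ecDist (encExp u) (encExp b) = d).card) := by
  refine ⟨hammingDist_Pmat, fun L _ d a b => ?_⟩
  refine Finset.card_equiv (Equiv.addRight (a - b)) fun u => ?_
  simp only [Finset.mem_filter, Finset.mem_univ, true_and, Equiv.coe_addRight, ecDist_encExp,
    add_assoc, sub_add_cancel]
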